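/- arXiv:1512.08141 — 3 statements merged into one kernel-verified Lean document; each statement's English description precedes it below -/
import Mathlib

section
/- Let G be a simple graph which is the disjoint union of two graphs H and K. Then G satisfies Serre's condition S_2 if and only if both H and K satisfy Serre's condition S_2. -/
/-!
The independence complex of `H ⊕g K` is the join `Ind H ∗ Ind K`, and the link of a face
`F₁ ⊔ F₂` of a join is the join of the links of `F₁` and `F₂`. The 1-skeleton of a join
`L₁ ∗ L₂` contains every edge from a vertex of `L₁` to a vertex of `L₂`, so it is connected when
both factors have vertices, and it is the 1-skeleton of the other factor when one has none.
Conversely, if `M` is a facet of `Ind K` (one exists since `K` is finite), the link of `F ⊔ M` is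
`link F ∗ {∅}`, whose 1-skeleton is that of `link F`; so `S₂` passes from the join to `Ind H`.
-/

/-- The circulant graph `C_n(S)` on vertex set `ZMod n`: `i` and `j` are adjacent
iff `i ≠ j` and `|i-j| ∈ S` or `n - |i-j| ∈ S` (encoded via `ZMod` subtraction). -/
def circulantGraph (n : ℕ) (S : Set ℕ) : SimpleGraph (ZMod n) where
  Adj i j := i ≠ j ∧ ((i - j).val ∈ S ∨ (j - i).val ∈ S)
  symm := ⟨fun i j h => ⟨h.1.symm, h.2.symm⟩⟩
  loopless := ⟨fun i h => h.1 rfl⟩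

/-- An (abstract) simplicial complex on vertex type `V`, as a downward closed
family of finite subsets of `V`. -/
def IsComplex {V : Type*} (Δ : Set (Finset V)) : Prop :=
  ∀ F ∈ Δ, ∀ G ⊆ F, G ∈ Δ

/-- The link of a face `F` in the complex `Δ`. -/
def linkC {V : Type*} [DecidableEq V] (Δ : Set (Finset V)) (F : Finset V) : Set (Finset V) :=
  {G | Disjoint G F ∧ G ∪ F ∈ Δ}

/-- A complex is connected if any two of its vertices can be joined by a path
of 1-dimensional faces. -/
def ComplexConnected {V : Type*} [DecidableEq V] (Δ : Set (Finset V)) : Prop :=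
  ∀ u, ({u} : Finset V) ∈ Δ → ∀ w, ({w} : Finset V) ∈ Δ →
    Relation.ReflTransGen (fun a b => a ≠ b ∧ ({a, b} : Finset V) ∈ Δ) u w

/-- Serre's condition `S₂` for a simplicial complex: the link of every face of the
complex whose link has dimension at least `1` is connected. -/
def IsS2 {V : Type*} [DecidableEq V] (Δ : Set (Finset V)) : Prop :=
  ∀ F ∈ Δ, (∃ G ∈ linkC Δ F, 2 ≤ G.card) → ComplexConnected (linkC Δ F)

/-- The independence complex of a graph: faces are the (finite) independent sets. -/
def IndComplex {V : Type*} (G : SimpleGraph V) : Set (Finset V) :=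
  {F | ∀ u ∈ F, ∀ v ∈ F, ¬ G.Adj u v}

/-- A graph is `S₂` if its independence complex is `S₂`. -/
def GraphS2 {V : Type*} [DecidableEq V] (G : SimpleGraph V) : Prop :=
  IsS2 (IndComplex G)

/-- The facets (maximal faces) of a complex. -/
def facetsOf {V : Type*} (Δ : Set (Finset V)) : Set (Finset V) :=
  {F | F ∈ Δ ∧ ∀ G ∈ Δ, F ⊆ G → F = G}

/-- A graph is well-covered if all its maximal independent sets have the same cardinality. -/
def WellCovered {V : Type*} (G : SimpleGraph V) : Prop :=
  ∀ A ∈ facetsOf (IndComplex G), ∀ B ∈ facetsOf (IndComplex G), A.card = B.card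

/-- A complex is pure if all its facets have the same cardinality. -/
def IsPure {V : Type*} (Δ : Set (Finset V)) : Prop :=
  ∀ F ∈ facetsOf Δ, ∀ G ∈ facetsOf Δ, F.card = G.card

/-- `L` is a shelling order of `Δ`: a linear order `F₁, …, Fₛ` of all the facets of `Δ`
such that for all `i < j` there are `v ∈ Fⱼ \ Fᵢ` and `l < j` with `Fⱼ \ F_l = {v}`. -/
def IsShellingOrder {V : Type*} [DecidableEq V] (Δ : Set (Finset V)) (L : List (Finset V)) : Prop :=
  L.Nodup ∧ (∀ F, F ∈ facetsOf Δ ↔ F ∈ L) ∧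
    ∀ i j : Fin L.length, i < j →
      ∃ v ∈ L.get j \ L.get i, ∃ l : Fin L.length, l < j ∧ L.get j \ L.get l = {v}

/-- A complex is shellable if its facets admit a shelling order. -/
def IsShellable {V : Type*} [DecidableEq V] (Δ : Set (Finset V)) : Prop :=
  ∃ L : List (Finset V), IsShellingOrder Δ L

/-- A pure complex is strongly connected if any two facets are joined by a sequence of
facets in which consecutive facets intersect in one element fewer than their cardinality. -/
def StronglyConnectedComplex {V : Type*} [DecidableEq V] (Δ : Set (Finset V)) : Prop :=
  ∀ F ∈ facetsOf Δ, ∀ F' ∈ facetsOf Δ,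
    Relation.ReflTransGen
      (fun A B => A ∈ facetsOf Δ ∧ B ∈ facetsOf Δ ∧ (A ∩ B).card = A.card - 1) F F'

/-- The join of two simplicial complexes (on disjoint vertex sets). -/
def joinC {V : Type*} [DecidableEq V] (Δ₁ Δ₂ : Set (Finset V)) : Set (Finset V) :=
  {F | ∃ F₁ ∈ Δ₁, ∃ F₂ ∈ Δ₂, F = F₁ ∪ F₂}

/-- The generating set of the one-paired circulant graph `C(n; a, b)`. -/
def onePairedSet (n a b : ℕ) : Set ℕ :=
  {d | 1 ≤ d ∧ d ≤ n / 2 ∧ a ∣ d ∧ ¬ (a * b ∣ d)}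

namespace Finset

variable {α β : Type*}

@[simp] lemma toLeft_singleton_inl (a : α) : ({Sum.inl a} : Finset (α ⊕ β)).toLeft = {a} := by
  ext; simp
@[simp] lemma toLeft_singleton_inr (b : β) : ({Sum.inr b} : Finset (α ⊕ β)).toLeft = ∅ := by
  ext; simp
@[simp] lemma toRight_singleton_inl (a : α) : ({Sum.inl a} : Finset (α ⊕ β)).toRight = ∅ := by
  ext; simp
@[simp] lemma toRight_singleton_inr (b : β) : ({Sum.inr b} : Finset (α ⊕ β)).toRight = {b} := by
  ext; simp

lemma disjoint_iff_disjoint_toLeft_and_toRight {u v : Finset (α ⊕ β)} :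
    Disjoint u v ↔ Disjoint u.toLeft v.toLeft ∧ Disjoint u.toRight v.toRight := by
  simp only [disjoint_left, mem_toLeft, mem_toRight, Sum.forall]

end Finset

open Finset Sum Relation

section

variable {V : Type*} {Δ : Set (Finset V)} {F : Finset V}

lemma empty_mem_linkC [DecidableEq V] (hF : F ∈ Δ) : ∅ ∈ linkC Δ F :=
  ⟨disjoint_empty_left F, by rwa [empty_union]⟩

lemma IsComplex.linkC [DecidableEq V] (hΔ : IsComplex Δ) : IsComplex (linkC Δ F) :=
  fun _ hG _ hHG => ⟨hG.1.mono_left hHG, hΔ _ hG.2 _ (union_subset_union_left hHG)⟩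

lemma IsComplex.eq_empty_of_forall_singleton_notMem (hΔ : IsComplex Δ)
    (hv : ∀ v, {v} ∉ Δ) {G : Finset V} (hG : G ∈ Δ) : G = ∅ :=
  eq_empty_of_forall_notMem fun v hv' => hv v (hΔ G hG {v} (singleton_subset_iff.2 hv'))

lemma linkC_eq_singleton_empty [DecidableEq V] (hF : F ∈ facetsOf Δ) : linkC Δ F = {∅} := by
  ext G
  refine ⟨fun ⟨hGF, hGFΔ⟩ => ?_, fun hG => (Set.mem_singleton_iff.1 hG) ▸ empty_mem_linkC hF.1⟩
  have hGsub : G ⊆ F := (hF.2 _ hGFΔ subset_union_right).symm ▸ subset_union_left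
  exact disjoint_self.1 (hGF.mono_right hGsub)

lemma exists_mem_facetsOf [Finite V] (hΔ : Δ.Nonempty) : ∃ F, F ∈ facetsOf Δ := by
  obtain ⟨F, hFΔ, hFmax⟩ := Δ.toFinite.exists_maximal hΔ
  exact ⟨F, hFΔ, fun G hG hFG => le_antisymm hFG (hFmax hG hFG)⟩

end

lemma empty_mem_indComplex {V : Type*} (G : SimpleGraph V) : ∅ ∈ IndComplex G :=
  fun _ hu => absurd hu (notMem_empty _)

lemma isComplex_indComplex {V : Type*} (G : SimpleGraph V) : IsComplex (IndComplex G) :=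
  fun _ hF _ hsub u hu v hv => hF u (hsub hu) v (hsub hv)

section SumJoin

variable {α β : Type*}

/-- The join of complexes on the disjoint vertex sets `α` and `β`, realised on `α ⊕ β`. -/
def sumJoin (Δ₁ : Set (Finset α)) (Δ₂ : Set (Finset β)) : Set (Finset (α ⊕ β)) :=
  {F | F.toLeft ∈ Δ₁ ∧ F.toRight ∈ Δ₂}

lemma indComplex_sum (H : SimpleGraph α) (K : SimpleGraph β) :
    IndComplex (H ⊕g K) = sumJoin (IndComplex H) (IndComplex K) := by
  ext F
  simp only [IndComplex, sumJoin, Set.mem_ofPred_eq, mem_toLeft, mem_toRight]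
  constructor
  · intro h
    exact ⟨fun u hu v hv => h _ hu _ hv, fun u hu v hv => h _ hu _ hv⟩
  · rintro ⟨hH, hK⟩ (u | u) hu (v | v) hv
    exacts [hH u hu v hv, by simp, by simp, hK u hu v hv]

variable [DecidableEq α] [DecidableEq β] {Δ₁ : Set (Finset α)} {Δ₂ : Set (Finset β)}

lemma linkC_sumJoin (F : Finset (α ⊕ β)) :
    linkC (sumJoin Δ₁ Δ₂) F = sumJoin (linkC Δ₁ F.toLeft) (linkC Δ₂ F.toRight) := by
  ext G
  simp only [linkC, sumJoin, Set.mem_ofPred_eq, disjoint_iff_disjoint_toLeft_and_toRight,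
    toLeft_union, toRight_union]
  tauto

lemma complexConnected_sumJoin {L₁ : Set (Finset α)} {L₂ : Set (Finset β)}
    (h₁ : (∀ b, {b} ∉ L₂) → ComplexConnected L₁) (h₂ : (∀ a, {a} ∉ L₁) → ComplexConnected L₂)
    (h0₁ : ∅ ∈ L₁) (h0₂ : ∅ ∈ L₂) : ComplexConnected (sumJoin L₁ L₂) := by
  have mixed : ∀ {x y}, {x} ∈ L₁ → {y} ∈ L₂ → (inl x ≠ inr y ∧
      ({inl x, inr y} : Finset (α ⊕ β)) ∈ sumJoin L₁ L₂) ∧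
      (inr y ≠ inl x ∧ ({inr y, inl x} : Finset (α ⊕ β)) ∈ sumJoin L₁ L₂) := fun hx hy =>
    ⟨⟨inl_ne_inr, by simp [sumJoin, hx, hy]⟩, ⟨inr_ne_inl, by simp [sumJoin, hx, hy]⟩⟩
  rintro (x | x) hx (y | y) hy <;> simp only [sumJoin, Set.mem_ofPred_eq, toLeft_singleton_inl,
    toRight_singleton_inl, toLeft_singleton_inr, toRight_singleton_inr] at hx hy
  · by_cases hb : ∃ b, {b} ∈ L₂
    · obtain ⟨b, hb⟩ := hb
      exact .head (mixed hx.1 hb).1 (.single (mixed hy.1 hb).2)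
    · refine ReflTransGen.lift inl (fun a b hab => ⟨inl_injective.ne hab.1, ?_⟩) _ _
        (h₁ (not_exists.1 hb) x hx.1 y hy.1)
      simpa [sumJoin, h0₂] using hab.2
  · exact ReflTransGen.single (mixed hx.1 hy.2).1
  · exact ReflTransGen.single (mixed hy.1 hx.2).2
  · by_cases ha : ∃ a, {a} ∈ L₁
    · obtain ⟨a, ha⟩ := ha
      exact .head (mixed ha hx.2).2 (.single (mixed ha hy.2).1)
    · refine ReflTransGen.lift inr (fun a b hab => ⟨inr_injective.ne hab.1, ?_⟩) _ _
        (h₂ (not_exists.1 ha) x hx.2 y hy.2)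
      simpa [sumJoin, h0₁] using hab.2

/-- Joining with `{∅}` adds no vertex, so the junk value of `Sum.elim id fun _ => u` on right
vertices never occurs along a path. -/
lemma ComplexConnected.of_sumJoin_singleton_empty_left {L₁ : Set (Finset α)}
    (h : ComplexConnected (sumJoin L₁ ({∅} : Set (Finset β)))) : ComplexConnected L₁ := by
  intro u hu w hw
  refine ReflTransGen.lift (Sum.elim id fun _ => u) ?_ _ _
    (h (inl u) (by simp [sumJoin, hu]) (inl w) (by simp [sumJoin, hw]))
  rintro (x | x) (y | y) ⟨hxy, hL, hR⟩ <;> simp_all [Function.onFun]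

lemma ComplexConnected.of_sumJoin_singleton_empty_right {L₂ : Set (Finset β)}
    (h : ComplexConnected (sumJoin ({∅} : Set (Finset α)) L₂)) : ComplexConnected L₂ := by
  intro u hu w hw
  refine ReflTransGen.lift (Sum.elim (fun _ => u) id) ?_ _ _
    (h (inr u) (by simp [sumJoin, hu]) (inr w) (by simp [sumJoin, hw]))
  rintro (x | x) (y | y) ⟨hxy, hL, hR⟩ <;> simp_all [Function.onFun]

lemma IsS2.of_sumJoin_left {M : Finset β} (hM : M ∈ facetsOf Δ₂) (h : IsS2 (sumJoin Δ₁ Δ₂)) :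
    IsS2 Δ₁ := by
  rintro F hF ⟨G, hG, hG2⟩
  have hlink : linkC (sumJoin Δ₁ Δ₂) (F.disjSum M) = sumJoin (linkC Δ₁ F) {∅} := by
    rw [linkC_sumJoin, toLeft_disjSum, toRight_disjSum, linkC_eq_singleton_empty hM]
  have hF' : F.disjSum M ∈ sumJoin Δ₁ Δ₂ :=
    ⟨by rwa [toLeft_disjSum], by rw [toRight_disjSum]; exact hM.1⟩
  have hG' : G.disjSum ∅ ∈ sumJoin (linkC Δ₁ F) ({∅} : Set (Finset β)) :=
    ⟨by rwa [toLeft_disjSum], toRight_disjSum⟩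
  exact .of_sumJoin_singleton_empty_left
    (hlink ▸ h _ hF' ⟨G.disjSum ∅, hlink ▸ hG', by simpa using hG2⟩)

lemma IsS2.of_sumJoin_right {M : Finset α} (hM : M ∈ facetsOf Δ₁) (h : IsS2 (sumJoin Δ₁ Δ₂)) :
    IsS2 Δ₂ := by
  rintro F hF ⟨G, hG, hG2⟩
  have hlink : linkC (sumJoin Δ₁ Δ₂) (M.disjSum F) = sumJoin {∅} (linkC Δ₂ F) := by
    rw [linkC_sumJoin, toLeft_disjSum, toRight_disjSum, linkC_eq_singleton_empty hM]
  have hF' : M.disjSum F ∈ sumJoin Δ₁ Δ₂ :=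
    ⟨by rw [toLeft_disjSum]; exact hM.1, by rwa [toRight_disjSum]⟩
  have hG' : (∅ : Finset α).disjSum G ∈ sumJoin ({∅} : Set (Finset α)) (linkC Δ₂ F) :=
    ⟨toLeft_disjSum, by rwa [toRight_disjSum]⟩
  exact .of_sumJoin_singleton_empty_right
    (hlink ▸ h _ hF' ⟨(∅ : Finset α).disjSum G, hlink ▸ hG', by simpa using hG2⟩)

lemma isS2_sumJoin (hc₁ : IsComplex Δ₁) (hc₂ : IsComplex Δ₂) (h₁ : IsS2 Δ₁) (h₂ : IsS2 Δ₂) :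
    IsS2 (sumJoin Δ₁ Δ₂) := by
  rintro F ⟨hF₁, hF₂⟩ ⟨G, hG, hG2⟩
  rw [linkC_sumJoin] at hG ⊢
  rw [← card_toLeft_add_card_toRight] at hG2
  refine complexConnected_sumJoin (fun hv => h₁ _ hF₁ ⟨G.toLeft, hG.1, ?_⟩)
    (fun hv => h₂ _ hF₂ ⟨G.toRight, hG.2, ?_⟩) (empty_mem_linkC hF₁) (empty_mem_linkC hF₂)
  · simpa [hc₂.linkC.eq_empty_of_forall_singleton_notMem hv hG.2] using hG2
  · simpa [hc₁.linkC.eq_empty_of_forall_singleton_notMem hv hG.1] using hG2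

end SumJoin

/-- The disjoint union of two graphs `H` and `K` is `S₂` iff both `H` and `K` are `S₂`. -/
theorem disjUnion_S2_iff {α β : Type*} [DecidableEq α] [DecidableEq β]
    [Fintype α] [Fintype β] (H : SimpleGraph α) (K : SimpleGraph β) :
    GraphS2 (H ⊕g K) ↔ GraphS2 H ∧ GraphS2 K := by
  obtain ⟨M₁, hM₁⟩ := exists_mem_facetsOf ⟨∅, empty_mem_indComplex H⟩
  obtain ⟨M₂, hM₂⟩ := exists_mem_facetsOf ⟨∅, empty_mem_indComplex K⟩
  simp only [GraphS2, indComplex_sum]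
  exact ⟨fun h => ⟨h.of_sumJoin_left hM₂, h.of_sumJoin_right hM₁⟩,
    fun ⟨hH, hK⟩ => isS2_sumJoin (isComplex_indComplex H) (isComplex_indComplex K) hH hK⟩
end

section
/- For every integer t ≥ 1, the circulant graphs C_{8t}(t, 4t), C_{10t}(2t, 5t), and C_{10t}(4t, 5t) all satisfy Serre's condition S_2. -/
/-!
The circulant graph `C_{Nt}(tS)` splits along the residues modulo `t` into `t` disjoint copies
of `C_N(S)`. In a disjoint union of graphs a link of the independence complex either has
vertices in two copies, and then any two of its vertices are joined through a vertex of another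
copy (vertices of different copies are never adjacent), or it lies in a single copy, where it is
a link of that copy. Hence `S₂` passes from `C_N(S)` to `C_{Nt}(tS)`, and it remains to check
`C_8(1,4)`, `C_10(2,5)` and `C_10(4,5)`: in each of them, any two vertices of a link of
dimension at least `1` are joined by at most three edges of the link.
-/

namespace SimpleGraph

section Link

variable {V : Type*} (G : SimpleGraph V)

def IsLinkVertex (F : Finset V) (v : V) : Prop :=
  v ∉ F ∧ ∀ x ∈ F, ¬ G.Adj v x

/-- The 1-skeleton of the link of `F` in `IndComplex G`. -/
def linkGraph (F : Finset V) : SimpleGraph V where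
  Adj a b := G.IsLinkVertex F a ∧ G.IsLinkVertex F b ∧ Gᶜ.Adj a b
  symm := ⟨fun _ _ h => ⟨h.2.1, h.1, h.2.2.symm⟩⟩
  loopless := ⟨fun _ h => h.2.2.ne rfl⟩

variable {G} [DecidableEq V] {F : Finset V}

theorem mem_linkC_indComplex_iff (hF : F ∈ IndComplex G) {A : Finset V} :
    A ∈ linkC (IndComplex G) F ↔ A ∈ IndComplex G ∧ ∀ v ∈ A, G.IsLinkVertex F v := by
  constructor
  · rintro ⟨hdisj, hind⟩
    refine ⟨fun u hu v hv => hind u (Finset.mem_union_left _ hu) v (Finset.mem_union_left _ hv),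
      fun v hv => ⟨Finset.disjoint_left.mp hdisj hv, fun x hx => ?_⟩⟩
    exact hind v (Finset.mem_union_left _ hv) x (Finset.mem_union_right _ hx)
  · rintro ⟨hA, hlink⟩
    refine ⟨Finset.disjoint_left.mpr fun v hv => (hlink v hv).1, fun u hu v hv => ?_⟩
    rcases Finset.mem_union.mp hu with hu | hu <;> rcases Finset.mem_union.mp hv with hv | hv
    · exact hA u hu v hv
    · exact (hlink u hu).2 v hv
    · exact fun h => (hlink v hv).2 u hu h.symm
    · exact hF u hu v hv

theorem singleton_mem_linkC_iff (hF : F ∈ IndComplex G) {v : V} :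
    {v} ∈ linkC (IndComplex G) F ↔ G.IsLinkVertex F v := by
  rw [mem_linkC_indComplex_iff hF]
  simp [IndComplex]

theorem pair_mem_linkC_iff (hF : F ∈ IndComplex G) {a b : V} :
    a ≠ b ∧ {a, b} ∈ linkC (IndComplex G) F ↔ (G.linkGraph F).Adj a b := by
  rw [mem_linkC_indComplex_iff hF]
  simp only [IndComplex, Set.mem_ofPred_eq, linkGraph, compl_adj, Finset.mem_insert,
    Finset.mem_singleton, forall_eq_or_imp, forall_eq, G.irrefl]
  constructor
  · rintro ⟨hne, ⟨⟨-, hab⟩, -⟩, ha, hb⟩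
    exact ⟨ha, hb, hne, hab⟩
  · rintro ⟨ha, hb, hne, hab⟩
    exact ⟨hne, ⟨⟨not_false, hab⟩, fun h => hab h.symm, not_false⟩, ha, hb⟩

theorem exists_two_le_card_mem_linkC_iff (hF : F ∈ IndComplex G) :
    (∃ A ∈ linkC (IndComplex G) F, 2 ≤ A.card) ↔ ∃ a b, (G.linkGraph F).Adj a b := by
  constructor
  · rintro ⟨A, hA, hcard⟩
    obtain ⟨a, ha, b, hb, hab⟩ := Finset.one_lt_card.mp hcard
    obtain ⟨hAind, hAlink⟩ := (mem_linkC_indComplex_iff hF).mp hA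
    have hsub : {a, b} ⊆ A := Finset.insert_subset ha (Finset.singleton_subset_iff.mpr hb)
    have hpair : {a, b} ∈ linkC (IndComplex G) F := (mem_linkC_indComplex_iff hF).mpr
      ⟨fun u hu v hv => hAind u (hsub hu) v (hsub hv), fun v hv => hAlink v (hsub hv)⟩
    exact ⟨a, b, (pair_mem_linkC_iff hF).mp ⟨hab, hpair⟩⟩
  · rintro ⟨a, b, hab⟩
    obtain ⟨hne, hpair⟩ := (pair_mem_linkC_iff hF).mpr hab
    exact ⟨{a, b}, hpair, (Finset.card_pair hne).ge⟩

theorem graphS2_iff : GraphS2 G ↔ ∀ F ∈ IndComplex G, (∃ a b, (G.linkGraph F).Adj a b) →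
    ∀ u, G.IsLinkVertex F u → ∀ w, G.IsLinkVertex F w → (G.linkGraph F).Reachable u w := by
  refine forall₂_congr fun F hF => ?_
  have hrel : (fun a b => a ≠ b ∧ ({a, b} : Finset V) ∈ linkC (IndComplex G) F) =
      (G.linkGraph F).Adj := by
    ext a b
    exact pair_mem_linkC_iff hF
  simp only [exists_two_le_card_mem_linkC_iff hF, ComplexConnected, singleton_mem_linkC_iff hF,
    hrel, reachable_iff_reflTransGen]

end Link

section Decide

variable {V : Type*} (G : SimpleGraph V)

def ReachableWithin : ℕ → V → V → Prop
  | 0, u, w => u = w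
  | n + 1, u, w => u = w ∨ ∃ z, G.Adj u z ∧ ReachableWithin n z w

instance decidableReachableWithin [Fintype V] [DecidableEq V] [DecidableRel G.Adj] :
    ∀ n, DecidableRel (G.ReachableWithin n)
  | 0 => fun u w => decidable_of_iff (u = w) Iff.rfl
  | n + 1 => fun u w =>
    have := decidableReachableWithin n
    decidable_of_iff (u = w ∨ ∃ z, G.Adj u z ∧ G.ReachableWithin n z w) Iff.rfl

instance [DecidableEq V] [DecidableRel G.Adj] (F : Finset V) :
    DecidablePred (G.IsLinkVertex F) :=
  fun _ => inferInstanceAs (Decidable (_ ∧ _))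

instance [DecidableEq V] [DecidableRel G.Adj] (F : Finset V) :
    DecidableRel (G.linkGraph F).Adj :=
  fun _ _ => inferInstanceAs (Decidable (_ ∧ _))

instance [DecidableRel G.Adj] : DecidablePred (· ∈ IndComplex G) :=
  fun F => inferInstanceAs (Decidable (∀ u ∈ F, ∀ v ∈ F, ¬ G.Adj u v))

variable {G}

theorem ReachableWithin.reachable :
    ∀ {n : ℕ} {u w : V}, G.ReachableWithin n u w → G.Reachable u w
  | 0, _, _, h => h ▸ Reachable.refl _
  | _ + 1, _, _, .inl h => h ▸ Reachable.refl _
  | _ + 1, _, _, .inr ⟨_, hadj, h⟩ => hadj.reachable.trans h.reachable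

theorem graphS2_of_reachableWithin [DecidableEq V] (n : ℕ)
    (h : ∀ F ∈ IndComplex G, (∃ a b, (G.linkGraph F).Adj a b) →
      ∀ u, G.IsLinkVertex F u → ∀ w, G.IsLinkVertex F w →
        (G.linkGraph F).ReachableWithin n u w) :
    GraphS2 G :=
  graphS2_iff.mpr fun F hF hedge u hu w hw => (h F hF hedge u hu w hw).reachable

end Decide

section Iso

variable {V W : Type*} {G : SimpleGraph V} {H : SimpleGraph W}

theorem isLinkVertex_map_iff (e : G ≃g H) (F : Finset V) (v : V) :
    H.IsLinkVertex (F.map e.toEquiv.toEmbedding) (e v) ↔ G.IsLinkVertex F v := by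
  unfold IsLinkVertex
  rw [Finset.forall_mem_map]
  exact and_congr (not_congr (Finset.mem_map' _))
    (forall₂_congr fun _ _ => not_congr e.map_adj_iff)

theorem map_mem_indComplex_iff (e : G ≃g H) (F : Finset V) :
    F.map e.toEquiv.toEmbedding ∈ IndComplex H ↔ F ∈ IndComplex G := by
  simp only [IndComplex, Set.mem_ofPred_eq, Finset.forall_mem_map]
  exact forall₂_congr fun _ _ => forall₂_congr fun _ _ => not_congr e.map_adj_iff

def Iso.linkGraph (e : G ≃g H) (F : Finset V) :
    G.linkGraph F ≃g H.linkGraph (F.map e.toEquiv.toEmbedding) where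
  toEquiv := e.toEquiv
  map_rel_iff' {a b} := by
    change H.IsLinkVertex _ (e a) ∧ H.IsLinkVertex _ (e b) ∧ Hᶜ.Adj (e a) (e b) ↔ _
    simp only [isLinkVertex_map_iff, compl_adj, e.map_adj_iff, ne_eq, e.injective.eq_iff]
    rfl

theorem _root_.GraphS2.of_iso [DecidableEq V] [DecidableEq W] (hH : GraphS2 H) (e : G ≃g H) :
    GraphS2 G := by
  rw [graphS2_iff] at hH ⊢
  intro F hF ⟨a, b, hab⟩ u hu w hw
  have hreach := hH (F.map e.toEquiv.toEmbedding) ((map_mem_indComplex_iff e F).mpr hF)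
    ⟨e a, e b, (e.linkGraph F).map_adj_iff.mpr hab⟩ (e u) ((isLinkVertex_map_iff e F u).mpr hu)
    (e w) ((isLinkVertex_map_iff e F w).mpr hw)
  exact (Iso.reachable_iff (φ := e.linkGraph F)).mp hreach

end Iso

section DisjointCopies

variable {ι W : Type*} {H : SimpleGraph W} {F : Finset (ι × W)}

noncomputable def _root_.Finset.fiber (F : Finset (ι × W)) (i : ι) : Finset W :=
  F.preimage (Prod.mk i) (Prod.mk_right_injective i).injOn

@[simp]
theorem _root_.Finset.mem_fiber {i : ι} {y : W} : y ∈ F.fiber i ↔ (i, y) ∈ F :=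
  Finset.mem_preimage

theorem bot_boxProd_adj {p q : ι × W} :
    ((⊥ : SimpleGraph ι) □ H).Adj p q ↔ p.1 = q.1 ∧ H.Adj p.2 q.2 := by
  simp [boxProd_adj, and_comm]

theorem fiber_mem_indComplex (hF : F ∈ IndComplex ((⊥ : SimpleGraph ι) □ H)) (i : ι) :
    F.fiber i ∈ IndComplex H := fun _ hx _ hy hxy =>
  hF _ (Finset.mem_fiber.mp hx) _ (Finset.mem_fiber.mp hy) (bot_boxProd_adj.mpr ⟨rfl, hxy⟩)

theorem isLinkVertex_bot_boxProd_iff {i : ι} {y : W} :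
    ((⊥ : SimpleGraph ι) □ H).IsLinkVertex F (i, y) ↔ H.IsLinkVertex (F.fiber i) y := by
  simp only [IsLinkVertex, Finset.mem_fiber, bot_boxProd_adj, Prod.forall, not_and]
  constructor
  · rintro ⟨hy, hadj⟩
    exact ⟨hy, fun x hx => hadj i x hx rfl⟩
  · rintro ⟨hy, hadj⟩
    exact ⟨hy, fun j x hx hij => hadj x (hij ▸ hx)⟩

theorem linkGraph_bot_boxProd_adj_iff {i : ι} {x y : W} :
    (((⊥ : SimpleGraph ι) □ H).linkGraph F).Adj (i, x) (i, y) ↔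
      (H.linkGraph (F.fiber i)).Adj x y := by
  simp only [linkGraph, isLinkVertex_bot_boxProd_iff, compl_adj, bot_boxProd_adj, ne_eq,
    Prod.mk.injEq, true_and]

theorem linkGraph_bot_boxProd_adj_of_fst_ne {p q : ι × W}
    (hp : ((⊥ : SimpleGraph ι) □ H).IsLinkVertex F p)
    (hq : ((⊥ : SimpleGraph ι) □ H).IsLinkVertex F q) (hpq : p.1 ≠ q.1) :
    (((⊥ : SimpleGraph ι) □ H).linkGraph F).Adj p q :=
  ⟨hp, hq, fun h => hpq (congrArg Prod.fst h), fun h => hpq (bot_boxProd_adj.mp h).1⟩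

def fiberLinkHom (F : Finset (ι × W)) (i : ι) :
    H.linkGraph (F.fiber i) →g ((⊥ : SimpleGraph ι) □ H).linkGraph F where
  toFun := Prod.mk i
  map_rel' := linkGraph_bot_boxProd_adj_iff.mpr

theorem graphS2_bot_boxProd [DecidableEq ι] [DecidableEq W] (hH : GraphS2 H) :
    GraphS2 ((⊥ : SimpleGraph ι) □ H) := by
  rw [graphS2_iff] at hH ⊢
  intro F hF ⟨a, b, hab⟩ u hu w hw
  by_cases hsplit : ∃ z, ((⊥ : SimpleGraph ι) □ H).IsLinkVertex F z ∧ z.1 ≠ u.1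
  · obtain ⟨z, hz, hzu⟩ := hsplit
    by_cases huw : u.1 = w.1
    · exact (linkGraph_bot_boxProd_adj_of_fst_ne hu hz hzu.symm).reachable.trans
        (linkGraph_bot_boxProd_adj_of_fst_ne hz hw (huw ▸ hzu)).reachable
    · exact (linkGraph_bot_boxProd_adj_of_fst_ne hu hw huw).reachable
  · push Not at hsplit
    obtain ⟨_, u⟩ := u
    obtain ⟨_, w⟩ := w
    obtain ⟨_, a⟩ := a
    obtain ⟨_, b⟩ := b
    obtain rfl := hsplit _ hw
    obtain rfl := hsplit _ hab.1
    obtain rfl := hsplit _ hab.2.1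
    have hreach := hH (F.fiber _) (fiber_mem_indComplex hF _)
      ⟨a, b, linkGraph_bot_boxProd_adj_iff.mp hab⟩ u (isLinkVertex_bot_boxProd_iff.mp hu)
      w (isLinkVertex_bot_boxProd_iff.mp hw)
    exact hreach.map (fiberLinkHom F _)

end DisjointCopies

end SimpleGraph

theorem mul_dvd_sub_add_mul_iff {N t i j d : ℤ} (ht : t ≠ 0) (hi : 0 ≤ i) (hit : i < t)
    (hj : 0 ≤ j) (hjt : j < t) : N * t ∣ i - j + t * d ↔ i = j ∧ N ∣ d := by
  constructor
  · intro h
    have hij : t ∣ i - j :=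
      (dvd_add_left (dvd_mul_right t d)).mp ((dvd_mul_left t N).trans h)
    obtain rfl : i = j := sub_eq_zero.mp (Int.eq_zero_of_abs_lt_dvd hij (abs_sub_lt_iff.mpr
      ⟨by linarith, by linarith⟩))
    rw [sub_self, zero_add, mul_comm t d] at h
    exact ⟨rfl, (mul_dvd_mul_iff_right ht).mp h⟩
  · rintro ⟨rfl, hd⟩
    rw [sub_self, zero_add, mul_comm t d]
    exact mul_dvd_mul_right hd t

section BlockEquiv

variable (N t : ℕ) [NeZero N] [NeZero t]

def blockMap (p : Fin t × ZMod N) : ZMod (N * t) :=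
  (p.1 : ℕ) + t * (p.2.val : ℕ)

variable {N t}

theorem blockMap_sub_eq_iff (p q : Fin t × ZMod N) (c : ℤ) :
    blockMap N t p - blockMap N t q = ((t * c : ℤ) : ZMod (N * t)) ↔
      p.1 = q.1 ∧ p.2 - q.2 = c := by
  have ht : (t : ℤ) ≠ 0 := by exact_mod_cast NeZero.ne t
  have hdvd := mul_dvd_sub_add_mul_iff (N := N) (d := p.2.val - q.2.val - c) ht
    (Int.natCast_nonneg p.1) (by exact_mod_cast p.1.isLt)
    (Int.natCast_nonneg q.1) (by exact_mod_cast q.1.isLt)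
  rw [← sub_eq_zero, Fin.ext_iff, ← Int.natCast_inj, ← sub_eq_zero (a := p.2 - q.2),
    ← ZMod.natCast_zmod_val p.2, ← ZMod.natCast_zmod_val q.2]
  have hcast : blockMap N t p - blockMap N t q - ((t * c : ℤ) : ZMod (N * t)) =
      (((p.1 : ℕ) - (q.1 : ℕ) + t * (p.2.val - q.2.val - c) : ℤ) : ZMod (N * t)) := by
    simp only [blockMap]
    push_cast
    ring
  have hcast' : ((p.2.val : ZMod N) - (q.2.val : ZMod N) - (c : ZMod N)) =
      ((p.2.val - q.2.val - c : ℤ) : ZMod N) := by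
    push_cast
    ring
  rw [hcast, hcast', ZMod.intCast_zmod_eq_zero_iff_dvd, ZMod.intCast_zmod_eq_zero_iff_dvd,
    Nat.cast_mul]
  exact hdvd

theorem blockMap_injective : Function.Injective (blockMap N t) := fun p q h => by
  have := (blockMap_sub_eq_iff p q 0).mp (by simp [h])
  exact Prod.ext this.1 (sub_eq_zero.mp (by simpa using this.2))

variable (N t)

noncomputable def blockEquiv : Fin t × ZMod N ≃ ZMod (N * t) :=
  Equiv.ofBijective (blockMap N t) <| (Fintype.bijective_iff_injective_and_card _).mpr
    ⟨blockMap_injective, by simp [mul_comm]⟩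

variable {N t}

theorem blockEquiv_apply (p : Fin t × ZMod N) : blockEquiv N t p = blockMap N t p :=
  rfl

theorem val_sub_blockMap_mem_image_iff {S : Set ℕ} (hS : ∀ c ∈ S, c < N)
    (p q : Fin t × ZMod N) :
    (blockMap N t p - blockMap N t q).val ∈ (t * ·) '' S ↔
      p.1 = q.1 ∧ (p.2 - q.2).val ∈ S := by
  constructor
  · rintro ⟨c, hc, hval⟩
    have h := (blockMap_sub_eq_iff p q c).mp (by
      rw [← ZMod.natCast_zmod_val (blockMap N t p - blockMap N t q), ← hval]
      push_cast
      rfl)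
    refine ⟨h.1, ?_⟩
    rw [h.2, Int.cast_natCast, ZMod.val_cast_of_lt (hS c hc)]
    exact hc
  · rintro ⟨h1, hS'⟩
    refine ⟨_, hS', ?_⟩
    have hlt : t * (p.2 - q.2).val < N * t := by
      rw [mul_comm N t]
      exact Nat.mul_lt_mul_of_pos_left (ZMod.val_lt _) (Nat.pos_of_neZero t)
    rw [(blockMap_sub_eq_iff p q (p.2 - q.2).val).mpr ⟨h1, by simp⟩]
    exact_mod_cast (ZMod.val_cast_of_lt hlt).symm

end BlockEquiv

open SimpleGraph in
noncomputable def circulantGraphMulIso (N t : ℕ) [NeZero N] [NeZero t] {S : Set ℕ}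
    (hS : ∀ c ∈ S, c < N) :
    ((⊥ : SimpleGraph (Fin t)) □ circulantGraph N S) ≃g
      circulantGraph (N * t) ((t * ·) '' S) where
  toEquiv := blockEquiv N t
  map_rel_iff' {p q} := by
    change _ ∧ (_ ∨ _) ↔ _
    rw [blockEquiv_apply, blockEquiv_apply, bot_boxProd_adj, val_sub_blockMap_mem_image_iff hS,
      val_sub_blockMap_mem_image_iff hS, blockMap_injective.ne_iff]
    change _ ↔ _ ∧ _ ∧ (_ ∨ _)
    grind [Prod.ext_iff]

theorem graphS2_circulantGraph_mul {N : ℕ} [NeZero N] {S : Set ℕ} (hS : ∀ c ∈ S, c < N)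
    (hG : GraphS2 (circulantGraph N S)) (t : ℕ) [NeZero t] :
    GraphS2 (circulantGraph (N * t) ((t * ·) '' S)) :=
  (SimpleGraph.graphS2_bot_boxProd hG).of_iso (circulantGraphMulIso N t hS).symm

instance (n : ℕ) (S : Set ℕ) [DecidablePred (· ∈ S)] :
    DecidableRel (circulantGraph n S).Adj :=
  fun a b => inferInstanceAs (Decidable (a ≠ b ∧ _))

theorem graphS2_circulantGraph_eight_one_four : GraphS2 (circulantGraph 8 {1, 4}) :=
  SimpleGraph.graphS2_of_reachableWithin 3 (by decide +kernel)

theorem graphS2_circulantGraph_ten_two_five : GraphS2 (circulantGraph 10 {2, 5}) :=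
  SimpleGraph.graphS2_of_reachableWithin 3 (by decide +kernel)

theorem graphS2_circulantGraph_ten_four_five : GraphS2 (circulantGraph 10 {4, 5}) :=
  SimpleGraph.graphS2_of_reachableWithin 3 (by decide +kernel)

/-- For every `t ≥ 1`, the circulant graphs `C_{8t}(t, 4t)`, `C_{10t}(2t, 5t)` and
`C_{10t}(4t, 5t)` are all `S₂`. -/
theorem circulant_families_S2 (t : ℕ) (ht : 1 ≤ t) :
    GraphS2 (circulantGraph (8 * t) {t, 4 * t}) ∧
    GraphS2 (circulantGraph (10 * t) {2 * t, 5 * t}) ∧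
    GraphS2 (circulantGraph (10 * t) {4 * t, 5 * t}) := by
  have : NeZero t := ⟨by omega⟩
  refine ⟨?_, ?_, ?_⟩
  · simpa [Set.image_insert_eq, mul_comm] using
      graphS2_circulantGraph_mul (by simp) graphS2_circulantGraph_eight_one_four t
  · simpa [Set.image_insert_eq, mul_comm] using
      graphS2_circulantGraph_mul (by simp) graphS2_circulantGraph_ten_two_five t
  · simpa [Set.image_insert_eq, mul_comm] using
      graphS2_circulantGraph_mul (by simp) graphS2_circulantGraph_ten_four_five t
end

section
/- Let d ≥ 1 and n = 4d+3, and let G = C_n(1,2,...,d). Then the facets of Ind(G) containing the vertex 0 are exactly the sets {0, x, y} with d+1 ≤ x ≤ 2d+1 and x+d+1 ≤ y ≤ 3d+2; consequently link_{Ind(G)}(0) is connected and Ind(G) satisfies Serre's condition S_2 (i.e., G is S_2). -/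
/-! In `C_{4d+3}(1, …, d)` two vertices are non-adjacent exactly when their circular distance
is at least `d + 1`. Four points pairwise that far apart would need a cycle of length `4d + 4`,
so every face has at most three vertices, and a face whose link contains an edge has at most
one. Translations are automorphisms, so only the links of `∅` and of `0` matter. The link of
`0` lives on `d + 1, …, 3d + 2`; there `d + 1` and `3d + 2` are joined and every other vertex
is joined to one of them. A facet through `0` dominates the graph, so it contains a point
within distance `d` of `d + 1` and one within distance `d` of `3d + 2`, and no third point
fits. -/
section IndComplex

variable {V : Type*} {G : SimpleGraph V}

theorem pair_mem_indComplex_iff [DecidableEq V] {u w : V} :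
    {u, w} ∈ IndComplex G ↔ ¬ G.Adj u w := by
  simp [IndComplex, G.adj_comm]

theorem insert_mem_indComplex_iff [DecidableEq V] {c : V} {F : Finset V} :
    insert c F ∈ IndComplex G ↔ F ∈ IndComplex G ∧ ∀ k ∈ F, ¬ G.Adj c k := by
  simp only [IndComplex, Set.mem_ofPred_eq, Finset.mem_insert, forall_eq_or_imp,
    SimpleGraph.irrefl, not_false_eq_true, true_and]
  exact ⟨fun h => ⟨fun u hu v hv => (h.2 u hu).2 v hv, h.1⟩,
    fun h => ⟨h.2, fun u hu => ⟨fun huc => h.2 u hu huc.symm, h.1 u hu⟩⟩⟩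

theorem exists_adj_of_mem_facetsOf_indComplex [DecidableEq V] {H : Finset V}
    (hH : H ∈ facetsOf (IndComplex G)) {c : V} (hc : c ∉ H) : ∃ k ∈ H, G.Adj c k := by
  by_contra! h
  exact hc (hH.2 _ (insert_mem_indComplex_iff.2 ⟨hH.1, h⟩) (Finset.subset_insert c H) ▸
    Finset.mem_insert_self c H)

theorem mem_linkC_singleton_iff [DecidableEq V] {Δ : Set (Finset V)} {a : V} {F : Finset V} :
    F ∈ linkC Δ {a} ↔ a ∉ F ∧ insert a F ∈ Δ := by
  simp [linkC, Finset.union_singleton]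

theorem linkC_empty [DecidableEq V] (Δ : Set (Finset V)) : linkC Δ ∅ = Δ := by
  ext F; simp [linkC]

end IndComplex

section Connected

variable {V W : Type*} [DecidableEq V] [DecidableEq W]

theorem complexConnected_of_forall_reflTransGen {Δ : Set (Finset V)} (p : V)
    (h : ∀ u, {u} ∈ Δ →
      Relation.ReflTransGen (fun a b => a ≠ b ∧ ({a, b} : Finset V) ∈ Δ) u p) :
    ComplexConnected Δ := by
  intro u hu w hw
  refine (h u hu).trans (Relation.reflTransGen_swap.1 (Relation.ReflTransGen.mono ?_ _ _ (h w hw)))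
  exact fun a b hab => ⟨hab.1.symm, Finset.pair_comm a b ▸ hab.2⟩

variable {G : SimpleGraph V} {G' : SimpleGraph W}

omit [DecidableEq V] [DecidableEq W] in
theorem map_mem_indComplex_iff (φ : G ≃g G') {F : Finset V} :
    F.map (φ : V ↪ W) ∈ IndComplex G' ↔ F ∈ IndComplex G := by
  simp [IndComplex, -Finset.mem_map_equiv, φ.map_adj_iff]

theorem map_mem_linkC_indComplex_iff (φ : G ≃g G') {a : V} {F : Finset V} :
    F.map (φ : V ↪ W) ∈ linkC (IndComplex G') {φ a} ↔ F ∈ linkC (IndComplex G) {a} := by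
  rw [mem_linkC_singleton_iff, mem_linkC_singleton_iff, ← map_mem_indComplex_iff φ,
    Finset.map_insert]
  simp

theorem ComplexConnected.linkC_indComplex_of_iso (φ : G ≃g G') {a : V}
    (h : ComplexConnected (linkC (IndComplex G) {a})) :
    ComplexConnected (linkC (IndComplex G') {φ a}) := by
  intro u hu w hw
  have pull : ∀ x, {x} ∈ linkC (IndComplex G') {φ a} →
      {φ.symm x} ∈ linkC (IndComplex G) {a} :=
    fun x hx => (map_mem_linkC_indComplex_iff φ).1 (by simpa using hx)
  have path := Relation.ReflTransGen.lift
    (p := fun x y => x ≠ y ∧ ({x, y} : Finset W) ∈ linkC (IndComplex G') {φ a}) φ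
    (fun x y hxy =>
      ⟨φ.injective.ne hxy.1, by simpa using (map_mem_linkC_indComplex_iff φ).2 hxy.2⟩)
    _ _ (h _ (pull u hu) _ (pull w hw))
  simpa [Function.onFun] using path

end Connected

namespace circulantGraph

def addRight {n : ℕ} (S : Set ℕ) (a : ZMod n) : circulantGraph n S ≃g circulantGraph n S where
  toEquiv := Equiv.addRight a
  map_rel_iff' := by simp [circulantGraph]

variable {n : ℕ} [NeZero n]

theorem Icc_adj_iff {d : ℕ} {i j : ZMod n} :
    (circulantGraph n (Set.Icc 1 d)).Adj i j ↔
      0 < i.val.dist j.val ∧ (i.val.dist j.val ≤ d ∨ n ≤ i.val.dist j.val + d) := by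
  wlog hji : j.val ≤ i.val generalizing i j
  · rw [(circulantGraph n _).adj_comm, this (le_of_not_ge hji), Nat.dist_comm]
  by_cases hij : i = j
  · simp [hij]
  have hsub : (i - j).val = i.val - j.val := ZMod.val_sub hji
  have hneg : (j - i).val = n - (i.val - j.val) := by
    rw [← neg_sub, ZMod.neg_val, if_neg (sub_ne_zero.2 hij), hsub]
  have hne : i.val ≠ j.val := (ZMod.val_injective n).ne hij
  have := ZMod.val_lt i
  simp only [circulantGraph, Set.mem_Icc, hsub, hneg, Nat.dist, ne_eq, hij, not_false_eq_true,
    true_and]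
  omega

variable {d : ℕ}

theorem ne_and_pair_mem_indComplex_Icc_iff {i j : ZMod n} :
    (i ≠ j ∧ {i, j} ∈ IndComplex (circulantGraph n (Set.Icc 1 d))) ↔
      d < i.val.dist j.val ∧ i.val.dist j.val + d < n := by
  rw [pair_mem_indComplex_iff, Icc_adj_iff, ← (ZMod.val_injective n).ne_iff]
  unfold Nat.dist
  omega

theorem singleton_mem_linkC_zero_Icc_iff {i : ZMod n} :
    {i} ∈ linkC (IndComplex (circulantGraph n (Set.Icc 1 d))) {0} ↔
      d < i.val ∧ i.val + d < n := by
  rw [mem_linkC_singleton_iff, Finset.mem_singleton, Finset.pair_comm, ← ne_eq, ne_comm,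
    ne_and_pair_mem_indComplex_Icc_iff, ZMod.val_zero, Nat.dist_zero_right]

theorem ne_and_pair_mem_linkC_zero_Icc_iff {i j : ZMod n} :
    (i ≠ j ∧ {i, j} ∈ linkC (IndComplex (circulantGraph n (Set.Icc 1 d))) {0}) ↔
      (d < i.val ∧ i.val + d < n) ∧ (d < j.val ∧ j.val + d < n) ∧
        d < i.val.dist j.val ∧ i.val.dist j.val + d < n := by
  rw [mem_linkC_singleton_iff, insert_mem_indComplex_iff, pair_mem_indComplex_iff]
  simp only [Finset.mem_insert, Finset.mem_singleton, forall_eq_or_imp, forall_eq]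
  simp only [Icc_adj_iff, ← (ZMod.val_injective n).ne_iff,
    ← (ZMod.val_injective n).eq_iff, ZMod.val_zero, Nat.dist]
  have := ZMod.val_lt i
  have := ZMod.val_lt j
  omega

end circulantGraph

namespace Circulant4dp3

variable {d : ℕ}

open circulantGraph

local notation "Γ" => circulantGraph (4 * d + 3) (Set.Icc 1 d)

theorem card_le_three_of_mem_indComplex {F : Finset (ZMod (4 * d + 3))}
    (hF : F ∈ IndComplex Γ) : F.card ≤ 3 := by
  by_contra! hcard
  obtain ⟨a, ha⟩ : F.Nonempty := Finset.card_pos.1 (by omega)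
  obtain ⟨b, hb, c, hc, e, he, hbc, hbe, hce⟩ :=
    Finset.two_lt_card.1 (by rw [Finset.card_erase_of_mem ha]; omega : 2 < (F.erase a).card)
  rw [Finset.mem_erase] at hb hc he
  have hab := hF a ha b hb.2
  have hac := hF a ha c hc.2
  have hae := hF a ha e he.2
  have hbc' := hF b hb.2 c hc.2
  have hbe' := hF b hb.2 e he.2
  have hce' := hF c hc.2 e he.2
  simp only [Icc_adj_iff, Nat.dist] at hab hac hae hbc' hbe' hce'
  simp only [← (ZMod.val_injective _).ne_iff] at hb hc he hbc hbe hce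
  have := ZMod.val_lt a
  have := ZMod.val_lt b
  have := ZMod.val_lt c
  have := ZMod.val_lt e
  omega

theorem triple_mem_facetsOf {x y : ℕ} (hx : d + 1 ≤ x) (hxy : x + d + 1 ≤ y)
    (hy : y ≤ 3 * d + 2) :
    {0, (x : ZMod (4 * d + 3)), (y : ZMod (4 * d + 3))} ∈ facetsOf (IndComplex Γ) := by
  have hx' : (x : ZMod (4 * d + 3)).val = x := ZMod.val_cast_of_lt (by omega)
  have hy' : (y : ZMod (4 * d + 3)).val = y := ZMod.val_cast_of_lt (by omega)
  refine ⟨?_, fun K hK hsub => Finset.Subset.antisymm hsub fun k hk => ?_⟩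
  · simp only [IndComplex, Set.mem_ofPred_eq, Finset.mem_insert, Finset.mem_singleton,
      forall_eq_or_imp, forall_eq]
    simp only [Icc_adj_iff, ZMod.val_zero, hx', hy', Nat.dist]
    omega
  · have h0 := hK k hk 0 (hsub (by simp))
    have hkx := hK k hk x (hsub (by simp))
    have hky := hK k hk y (hsub (by simp))
    simp only [Finset.mem_insert, Finset.mem_singleton]
    simp only [Icc_adj_iff, ZMod.val_zero, hx', hy', Nat.dist] at h0 hkx hky
    simp only [← (ZMod.val_injective _).eq_iff, ZMod.val_zero, hx', hy']
    have := ZMod.val_lt k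
    omega

theorem exists_mem_near_of_mem_facetsOf {H : Finset (ZMod (4 * d + 3))}
    (hH : H ∈ facetsOf (IndComplex Γ)) (h0 : 0 ∈ H) {c : ℕ} (hc : d + 1 ≤ c)
    (hc' : c ≤ 3 * d + 2) :
    ∃ k ∈ H, d + 1 ≤ k.val ∧ k.val ≤ 3 * d + 2 ∧ k.val.dist c ≤ d := by
  have hcv : (c : ZMod (4 * d + 3)).val = c := ZMod.val_cast_of_lt (by omega)
  by_cases hcH : (c : ZMod (4 * d + 3)) ∈ H
  · exact ⟨c, hcH, by simp [hcv, hc, hc']⟩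
  obtain ⟨k, hk, hadj⟩ := exists_adj_of_mem_facetsOf_indComplex hH hcH
  have hk0 := hH.1 k hk 0 h0
  refine ⟨k, hk, ?_⟩
  simp only [Icc_adj_iff, hcv, ZMod.val_zero, Nat.dist] at hadj hk0 ⊢
  have := ZMod.val_lt k
  omega

theorem eq_triple_of_mem_facetsOf {H : Finset (ZMod (4 * d + 3))}
    (hH : H ∈ facetsOf (IndComplex Γ)) (h0 : 0 ∈ H) :
    ∃ x y : ℕ, d + 1 ≤ x ∧ x ≤ 2 * d + 1 ∧ x + d + 1 ≤ y ∧ y ≤ 3 * d + 2 ∧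
      H = {0, (x : ZMod (4 * d + 3)), (y : ZMod (4 * d + 3))} := by
  obtain ⟨a, ha, hlow⟩ :=
    exists_mem_near_of_mem_facetsOf hH h0 (c := d + 1) le_rfl (by omega)
  obtain ⟨b, hb, hhigh⟩ :=
    exists_mem_near_of_mem_facetsOf hH h0 (c := 3 * d + 2) (by omega) le_rfl
  have hab := hH.1 a ha b hb
  simp only [Icc_adj_iff, Nat.dist] at hab hlow hhigh
  refine ⟨a.val, b.val, by omega, by omega, by omega, by omega, ?_⟩
  rw [ZMod.natCast_zmod_val, ZMod.natCast_zmod_val]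
  ext k
  simp only [Finset.mem_insert, Finset.mem_singleton]
  refine ⟨fun hk => ?_, by rintro (rfl | rfl | rfl) <;> assumption⟩
  have hk0 := hH.1 k hk 0 h0
  have hka := hH.1 k hk a ha
  have hkb := hH.1 k hk b hb
  simp only [Icc_adj_iff, ZMod.val_zero, Nat.dist] at hk0 hka hkb
  simp only [← (ZMod.val_injective _).eq_iff, ZMod.val_zero]
  have := ZMod.val_lt k
  omega

theorem linkC_zero_complexConnected : ComplexConnected (linkC (IndComplex Γ) {0}) := by
  obtain ⟨P, hP⟩ : ∃ P : ZMod (4 * d + 3), P.val = d + 1 :=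
    ⟨_, ZMod.val_cast_of_lt (by omega)⟩
  obtain ⟨Q, hQ⟩ : ∃ Q : ZMod (4 * d + 3), Q.val = 3 * d + 2 :=
    ⟨_, ZMod.val_cast_of_lt (by omega)⟩
  refine complexConnected_of_forall_reflTransGen P fun u hu => ?_
  rw [singleton_mem_linkC_zero_Icc_iff] at hu
  by_cases hlow : u.val ≤ 2 * d + 1
  · have huQ : u ≠ Q ∧ {u, Q} ∈ linkC (IndComplex Γ) {0} :=
      ne_and_pair_mem_linkC_zero_Icc_iff.2 (by simp only [hQ, Nat.dist]; omega)
    have hQP : Q ≠ P ∧ {Q, P} ∈ linkC (IndComplex Γ) {0} :=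
      ne_and_pair_mem_linkC_zero_Icc_iff.2 (by simp only [hP, hQ, Nat.dist]; omega)
    exact .head huQ (.single hQP)
  · exact .single (ne_and_pair_mem_linkC_zero_Icc_iff.2 (by simp only [hP, Nat.dist]; omega))

theorem linkC_singleton_complexConnected (a : ZMod (4 * d + 3)) :
    ComplexConnected (linkC (IndComplex Γ) {a}) := by
  have h : ComplexConnected (linkC (IndComplex Γ) {0 + a}) :=
    linkC_zero_complexConnected.linkC_indComplex_of_iso (circulantGraph.addRight _ a)
  rwa [zero_add] at h

theorem indComplex_complexConnected : ComplexConnected (IndComplex Γ) := by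
  -- a vertex within distance `d` of `0` is at distance at least `d + 1` from `2d + 1`
  obtain ⟨M, hM⟩ : ∃ M : ZMod (4 * d + 3), M.val = 2 * d + 1 :=
    ⟨_, ZMod.val_cast_of_lt (by omega)⟩
  refine complexConnected_of_forall_reflTransGen 0 fun u _ => ?_
  by_cases hu0 : u = 0
  · rw [hu0]
  have hu0' := (ZMod.val_injective _).ne hu0
  have := ZMod.val_lt u
  rw [ZMod.val_zero] at hu0'
  by_cases hnear : d < u.val ∧ u.val + d < 4 * d + 3
  · exact .single
      (ne_and_pair_mem_indComplex_Icc_iff.2 (by simp only [ZMod.val_zero, Nat.dist]; omega))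
  · have huM : u ≠ M ∧ {u, M} ∈ IndComplex Γ :=
      ne_and_pair_mem_indComplex_Icc_iff.2 (by simp only [hM, Nat.dist]; omega)
    have hM0 : M ≠ 0 ∧ {M, 0} ∈ IndComplex Γ :=
      ne_and_pair_mem_indComplex_Icc_iff.2 (by simp only [hM, ZMod.val_zero, Nat.dist]; omega)
    exact .head huM (.single hM0)

end Circulant4dp3

theorem circulant_4dp3_link_zero_general (d : ℕ) (n : ℕ) (hn : n = 4 * d + 3)
    (G : SimpleGraph (ZMod n)) (hG : G = circulantGraph n (Set.Icc 1 d)) :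
    (∀ H : Finset (ZMod n),
      (H ∈ facetsOf (IndComplex G) ∧ (0 : ZMod n) ∈ H) ↔
        ∃ x y : ℕ, d + 1 ≤ x ∧ x ≤ 2 * d + 1 ∧ x + d + 1 ≤ y ∧ y ≤ 3 * d + 2 ∧
          H = {0, (x : ZMod n), (y : ZMod n)}) ∧
    ComplexConnected (linkC (IndComplex G) {0}) ∧
    GraphS2 G := by
  subst hG hn
  refine ⟨fun H => ⟨fun ⟨hH, h0⟩ => Circulant4dp3.eq_triple_of_mem_facetsOf hH h0, ?_⟩,
    Circulant4dp3.linkC_zero_complexConnected, ?_⟩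
  · rintro ⟨x, y, hx, -, hxy, hy, rfl⟩
    exact ⟨Circulant4dp3.triple_mem_facetsOf hx hxy hy, by simp⟩
  · rintro F - ⟨K, ⟨hdisj, hKF⟩, hK⟩
    have hF : F.card ≤ 1 := by
      have := Circulant4dp3.card_le_three_of_mem_indComplex hKF
      rw [Finset.card_union_of_disjoint hdisj] at this
      omega
    rcases Nat.le_one_iff_eq_zero_or_eq_one.1 hF with h | h
    · rw [Finset.card_eq_zero.1 h, linkC_empty]
      exact Circulant4dp3.indComplex_complexConnected
    · obtain ⟨a, rfl⟩ := Finset.card_eq_one.1 h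
      exact Circulant4dp3.linkC_singleton_complexConnected a

/-- For `d ≥ 1` and `n = 4d+3`, in `G = C_n(1,…,d)` the facets of `Ind(G)` containing
the vertex `0` are exactly the sets `{0, x, y}` with `d+1 ≤ x ≤ 2d+1` and
`x+d+1 ≤ y ≤ 3d+2`; consequently `link_{Ind(G)}(0)` is connected and `G` is `S₂`. -/
theorem circulant_4dp3_link_zero (d : ℕ) (hd : 1 ≤ d) (n : ℕ) (hn : n = 4 * d + 3)
    (G : SimpleGraph (ZMod n)) (hG : G = circulantGraph n (Set.Icc 1 d)) :
    (∀ H : Finset (ZMod n),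
      (H ∈ facetsOf (IndComplex G) ∧ (0 : ZMod n) ∈ H) ↔
        ∃ x y : ℕ, d + 1 ≤ x ∧ x ≤ 2 * d + 1 ∧ x + d + 1 ≤ y ∧ y ≤ 3 * d + 2 ∧
          H = {0, (x : ZMod n), (y : ZMod n)}) ∧
    ComplexConnected (linkC (IndComplex G) {0}) ∧
    GraphS2 G :=
  circulant_4dp3_link_zero_general d n hn G hG
end
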